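/- arXiv:2507.15781 — 3 statements merged into one kernel-verified Lean document; each statement's English description precedes it below -/
import Mathlib

section
/- Let a : ℝ → ℝ be continuous and 2π-periodic with ∫_{-π}^{π} a(s) ds = 0, let A ∈ ℝ, and let y : ℝ → ℝ be differentiable and 2π-periodic with y'(x) = a(x)·y(x) + A for all x ∈ ℝ. Then A = 0 and y(x) = y(0)·exp(∫_0^x a(s) ds) for all x ∈ ℝ. -/
/-!
With `F x = ∫₀ˣ a`, which is `2π`-periodic because `a` has zero mean, the integrating factor
`exp (-F)` turns the equation into `(y exp (-F))' = A exp (-F)`. Integrating over one period, the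
left side contributes `0` by periodicity while the right side is `A` times a positive number, so
`A = 0`, and then `y exp (-F)` is constant.
-/

open Function Real intervalIntegral

theorem Function.Periodic.primitive_periodic {E : Type*} [NormedAddCommGroup E] [NormedSpace ℝ E]
    {f : ℝ → E} {T : ℝ} (hf : Periodic f T)
    (h_int : ∀ t₁ t₂, IntervalIntegrable f MeasureTheory.volume t₁ t₂) {t : ℝ}
    (h_mean : ∫ x in t..t + T, f x = 0) :
    Periodic (fun x => ∫ s in 0..x, f s) T := fun x => by
  simp only [hf.intervalIntegral_add_eq_add 0 x h_int, hf.intervalIntegral_add_eq 0 t, h_mean,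
    add_zero]

theorem hasDerivAt_mul_exp_neg {F y : ℝ → ℝ} {b A x : ℝ} (hF : HasDerivAt F b x)
    (hy : HasDerivAt y (b * y x + A) x) :
    HasDerivAt (fun x => y x * exp (-F x)) (A * exp (-F x)) x :=
  (hy.mul hF.fun_neg.exp).congr_deriv (by ring)

theorem eq_zero_of_hasDerivAt_const_mul_pos {g h : ℝ → ℝ} {c a b : ℝ}
    (hg : ∀ x, HasDerivAt g (c * h x) x) (hh : Continuous h) (h_pos : ∀ x, 0 < h x)
    (hab : a < b) (hg_eq : g a = g b) : c = 0 := by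
  have h_ftc := integral_eq_sub_of_hasDerivAt (fun x _ => hg x)
    ((continuous_const.mul hh).intervalIntegrable a b)
  rw [hg_eq, sub_self, integral_const_mul] at h_ftc
  exact (mul_eq_zero.mp h_ftc).resolve_right
    (intervalIntegral_pos_of_pos (hh.intervalIntegrable a b) h_pos hab).ne'

/-- Rigidity of periodic solutions to `y' = a y + A` with `a` continuous,
`2π`-periodic, of zero mean: periodicity of `y` forces `A = 0` and
`y(x) = y(0) exp(∫₀ˣ a)`. -/
theorem stmt_5 (a : ℝ → ℝ) (ha : Continuous a) (hap : ∀ x, a (x + 2 * Real.pi) = a x)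
    (hai : (∫ s in (-Real.pi)..Real.pi, a s) = 0) (A : ℝ) (y : ℝ → ℝ)
    (hy : ∀ x, HasDerivAt y (a x * y x + A) x)
    (hyp : ∀ x, y (x + 2 * Real.pi) = y x) :
    A = 0 ∧ ∀ x, y x = y 0 * Real.exp (∫ s in (0 : ℝ)..x, a s) := by
  set F : ℝ → ℝ := fun x => ∫ s in (0 : ℝ)..x, a s
  have hF : ∀ x, HasDerivAt F (a x) x := fun x => (ha.integral_hasStrictDerivAt 0 x).hasDerivAt
  have hF_cont : Continuous F := continuous_iff_continuousAt.2 fun x => (hF x).continuousAt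
  have hF_per : Periodic F (2 * π) :=
    Periodic.primitive_periodic hap (ha.intervalIntegrable · ·) (t := -π)
      (by rwa [show -π + 2 * π = π by ring])
  set G : ℝ → ℝ := fun x => y x * exp (-F x)
  have hG : ∀ x, HasDerivAt G (A * exp (-F x)) x := fun x => hasDerivAt_mul_exp_neg (hF x) (hy x)
  have hG_per : G 0 = G (2 * π) := by
    simp only [G]
    rw [← hyp 0, ← hF_per 0, zero_add]
  have hA : A = 0 :=
    eq_zero_of_hasDerivAt_const_mul_pos hG hF_cont.neg.rexp (fun x => exp_pos _) two_pi_pos hG_per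
  refine ⟨hA, fun x => ?_⟩
  have hG_const : G x = G 0 := by
    subst hA
    exact is_const_of_deriv_eq_zero (fun z => (hG z).differentiableAt)
      (fun z => by simpa using (hG z).deriv) x 0
  simp only [G, F, integral_same, neg_zero, exp_zero, mul_one] at hG_const
  rw [← hG_const, mul_assoc, ← exp_add, neg_add_cancel, exp_zero, mul_one]
end

section
/- Let D > 0, Φ > 0, and let g : ℝ → ℝ be continuous, 2π-periodic, with ∫_{-π}^{π} g(s) ds = 0. Define h(x) = exp((1/D)·∫_0^x g(s) ds) and η̄(x) = Φ·h(x)/(∫_{-π}^{π} h(s) ds). Then: (i) η̄ is 2π-periodic, strictly positive, satisfies D·η̄'(x) = g(x)·η̄(x) for all x ∈ ℝ, and ∫_{-π}^{π} η̄(x) dx = Φ; (ii) conversely, if y : ℝ → ℝ is differentiable and 2π-periodic, satisfies D·y'(x) = g(x)·y(x) + A for all x ∈ ℝ for some constant A ∈ ℝ, and ∫_{-π}^{π} y(x) dx = Φ, then A = 0 and y(x) = η̄(x) for all x. -/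
/-!
With `P x = (1/D) ∫₀ˣ g`, which is `2π`-periodic because `g` has zero mean over a period,
`exp (-P)` is an integrating factor: `(y e^{-P})' = (A/D) e^{-P}`. Integrating over a period,
periodicity of `y e^{-P}` forces `A = 0`; then `y e^{-P}` is constant, so `y` is a multiple of
`h = e^{P}`, and the prescribed mass fixes the multiple.
-/

open Function Real intervalIntegral

theorem Function.Periodic.periodic_primitive_of_intervalIntegral_eq_zero
    {E : Type*} [NormedAddCommGroup E] [NormedSpace ℝ E] {g : ℝ → E} {T : ℝ}
    (hg : Periodic g T) (hint : ∀ a b, IntervalIntegrable g MeasureTheory.volume a b)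
    (t : ℝ) (hzero : ∫ x in t..t + T, g x = 0) (a : ℝ) :
    Periodic (fun x => ∫ s in a..x, g s) T := fun x => by
  simp only [hg.intervalIntegral_add_eq_add a x hint, hg.intervalIntegral_add_eq a t, hzero,
    add_zero]

section IntegratingFactor

variable {p P y : ℝ → ℝ}

theorem hasDerivAt_mul_exp_neg_of_hasDerivAt {b : ℝ → ℝ} (hP : ∀ x, HasDerivAt P (p x) x)
    (hy : ∀ x, HasDerivAt y (p x * y x + b x) x) (x : ℝ) :
    HasDerivAt (fun x => y x * exp (-P x)) (b x * exp (-P x)) x :=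
  ((hy x).mul (hP x).neg.exp).congr_deriv (by rw [Pi.neg_apply]; ring)

theorem eq_zero_of_periodic_of_hasDerivAt {A T : ℝ} (hT : 0 < T)
    (hP : ∀ x, HasDerivAt P (p x) x) (hPT : Periodic P T) (hyT : Periodic y T)
    (hy : ∀ x, HasDerivAt y (p x * y x + A) x) : A = 0 := by
  have hcont : Continuous fun x => exp (-P x) :=
    (continuous_iff_continuousAt.2 fun x => (hP x).continuousAt).neg.rexp
  have hFTC := integral_eq_sub_of_hasDerivAt (a := 0) (b := T)
    (fun x _ => hasDerivAt_mul_exp_neg_of_hasDerivAt (b := fun _ => A) hP hy x)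
    ((continuous_const.mul hcont).intervalIntegrable _ _)
  have hpos : 0 < ∫ x in (0 : ℝ)..T, exp (-P x) :=
    intervalIntegral_pos_of_pos (hcont.intervalIntegrable _ _) (fun x => exp_pos _) hT
  have hperiod : y T * exp (-P T) = y 0 * exp (-P 0) := by
    simpa only [zero_add] using congrArg₂ (fun u v => u * exp (-v)) (hyT 0) (hPT 0)
  rw [integral_const_mul, hperiod, sub_self] at hFTC
  exact (mul_eq_zero.1 hFTC).resolve_right hpos.ne'

theorem exists_eq_mul_exp_of_hasDerivAt (hP : ∀ x, HasDerivAt P (p x) x)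
    (hy : ∀ x, HasDerivAt y (p x * y x) x) : ∃ c, ∀ x, y x = c * exp (P x) := by
  have hw : ∀ x, HasDerivAt (fun x => y x * exp (-P x)) 0 x := fun x => by
    simpa using hasDerivAt_mul_exp_neg_of_hasDerivAt (b := 0) hP (by simpa using hy) x
  refine ⟨y 0 * exp (-P 0), fun x => ?_⟩
  rw [← is_const_of_deriv_eq_zero (fun x => (hw x).differentiableAt) (fun x => (hw x).deriv) x 0,
    mul_assoc, ← exp_add, neg_add_cancel, exp_zero, mul_one]

end IntegratingFactor

/-- Appendix Theorem (steady state of the non-plastic followers), once-integrated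
form: `η̄ = Φ h / ∫ h` with `h(x) = exp((1/D) ∫₀ˣ g)` is a `2π`-periodic, strictly
positive solution of `D η̄' = g η̄` of total mass `Φ`; conversely any `2π`-periodic
solution of `D y' = g y + A` of mass `Φ` has `A = 0` and equals `η̄`. -/
theorem stmt_6 (D Φ : ℝ) (hD : 0 < D) (hΦ : 0 < Φ)
    (g : ℝ → ℝ) (hg : Continuous g) (hgp : ∀ x, g (x + 2 * Real.pi) = g x)
    (hgi : (∫ s in (-Real.pi)..Real.pi, g s) = 0)
    (h η : ℝ → ℝ)
    (hh : ∀ x, h x = Real.exp ((1 / D) * ∫ s in (0 : ℝ)..x, g s))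
    (hη : ∀ x, η x = Φ * h x / ∫ s in (-Real.pi)..Real.pi, h s) :
    ((∀ x, η (x + 2 * Real.pi) = η x) ∧ (∀ x, 0 < η x) ∧
      (∀ x, HasDerivAt η (g x * η x / D) x) ∧
      (∫ x in (-Real.pi)..Real.pi, η x) = Φ) ∧
    (∀ (A : ℝ) (y : ℝ → ℝ),
      (∀ x, HasDerivAt y ((g x * y x + A) / D) x) →
      (∀ x, y (x + 2 * Real.pi) = y x) →
      (∫ x in (-Real.pi)..Real.pi, y x) = Φ →
      A = 0 ∧ ∀ x, y x = η x) := by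
  set P : ℝ → ℝ := fun x => (1 / D) * ∫ s in (0 : ℝ)..x, g s
  have hP : ∀ x, HasDerivAt P (g x / D) x := fun x => by
    simpa [P, div_eq_inv_mul] using
      (hg.integral_hasStrictDerivAt 0 x).hasDerivAt.const_mul (1 / D)
  have hPT : Periodic P (2 * π) := fun x => by
    simp only [P, Periodic.periodic_primitive_of_intervalIntegral_eq_zero hgp
      (fun a b => hg.intervalIntegrable a b) (-π) (by rwa [(by ring : -π + 2 * π = π)]) 0 x]
  have hh' : h = fun x => exp (P x) := funext hh
  set I := ∫ s in (-π)..π, h s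
  have hI : 0 < I := intervalIntegral_pos_of_pos
    ((hh' ▸ continuous_iff_continuousAt.2 fun x => (hP x).exp.continuousAt).intervalIntegrable _ _)
    (fun x => hh' ▸ exp_pos _) (by linarith [pi_pos])
  have hη' : η = fun x => Φ / I * exp (P x) := funext fun x => by rw [hη, hh', mul_div_right_comm]
  refine ⟨⟨fun x => by simp only [hη', hPT x], fun x => by rw [hη']; positivity,
    fun x => ?_, ?_⟩, fun A y hy hyT hymass => ?_⟩
  · rw [hη']
    exact ((hP x).exp.const_mul (Φ / I)).congr_deriv (by ring)
  · simp only [hη', integral_const_mul, ← hh']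
    exact div_mul_cancel₀ Φ hI.ne'
  have hy' : ∀ x, HasDerivAt y (g x / D * y x + A / D) x := fun x => (hy x).congr_deriv (by ring)
  have hA : A = 0 := by
    simpa [hD.ne'] using eq_zero_of_periodic_of_hasDerivAt two_pi_pos hP hPT hyT hy'
  obtain ⟨c, hc⟩ := exists_eq_mul_exp_of_hasDerivAt hP (by simpa [hA] using hy')
  have hcI : c * I = Φ := by simpa only [hc, integral_const_mul, ← hh', I] using hymass
  refine ⟨hA, fun x => ?_⟩
  rw [hc, hη', ← hcI, mul_div_cancel_right₀ _ hI.ne']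
end

section
/- Let β < 0, δ ≥ 0, K > 0, and let V : [0, ∞) → [0, ∞) be differentiable with V'(t) ≤ β·V(t) + δ·exp(-K·t)·√(V(t)) for all t ≥ 0. Then V(t) → 0 as t → ∞. -/
/-!
Young's inequality absorbs the square-root term,
`δ e^{-Kt} √V ≤ (-β/2) V + C e^{-2Kt}` with `C = δ² / (-2β)`, so that
`V' ≤ μ V + C e^{2μt}` for `μ = max (β/2) (-K) < 0`. For this linear inequality
`e^{-μt} V(t) + (C / -μ) e^{μt}` is nonincreasing, whence `V(t) ≤ (V(0) + C / -μ) e^{μt}`.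
-/

open Set Filter Real

theorem le_exp_mul_of_hasDerivWithinAt_le {μ C : ℝ} (hμ : μ < 0) (hC : 0 ≤ C) {V V' : ℝ → ℝ}
    (hV : ∀ t ≥ 0, HasDerivWithinAt V (V' t) (Ici 0) t)
    (hV' : ∀ t ≥ 0, V' t ≤ μ * V t + C * exp (2 * μ * t)) {t : ℝ} (ht : 0 ≤ t) :
    V t ≤ (V 0 + C / -μ) * exp (μ * t) := by
  set F : ℝ → ℝ := fun s ↦ exp (-μ * s) * V s + C / -μ * exp (μ * s)
  have hF (s : ℝ) (hs : 0 ≤ s) : HasDerivWithinAt F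
      (-μ * exp (-μ * s) * V s + exp (-μ * s) * V' s + C / -μ * (μ * exp (μ * s))) (Ici 0) s := by
    have hexp (c : ℝ) : HasDerivWithinAt (fun s ↦ exp (c * s)) (c * exp (c * s)) (Ici 0) s := by
      simpa [mul_comm] using ((hasDerivWithinAt_id s _).const_mul c).exp
    exact ((hexp (-μ)).mul (hV s hs)).add ((hexp μ).const_mul _)
  have hF_nonpos (s : ℝ) (hs : 0 ≤ s) :
      -μ * exp (-μ * s) * V s + exp (-μ * s) * V' s + C / -μ * (μ * exp (μ * s)) ≤ 0 := by
    have hexp_mul : exp (-μ * s) * exp (2 * μ * s) = exp (μ * s) := by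
      rw [← exp_add]; ring_nf
    calc _ = exp (-μ * s) * (V' s - μ * V s) - C * exp (μ * s) := by
            field_simp [hμ.ne]; ring
      _ ≤ exp (-μ * s) * (C * exp (2 * μ * s)) - C * exp (μ * s) := by
            gcongr; linarith [hV' s hs]
      _ = 0 := by rw [mul_left_comm, hexp_mul, sub_self]
  have hF_anti : AntitoneOn F (Ici 0) :=
    antitoneOn_of_hasDerivWithinAt_nonpos (convex_Ici 0)
      (fun s hs ↦ (hF s hs).continuousWithinAt)
      (fun s hs ↦ (hF s (interior_subset hs).out).mono interior_subset)
      (fun s hs ↦ hF_nonpos s (interior_subset hs).out)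
  have hFt : F t ≤ V 0 + C / -μ := by
    simpa [F] using hF_anti self_mem_Ici ht ht
  have hCterm : 0 ≤ C / -μ * exp (μ * t) := by
    have : 0 < -μ := by linarith
    positivity
  calc V t = exp (μ * t) * (exp (-μ * t) * V t) := by
        rw [← mul_assoc, ← exp_add]; simp
    _ ≤ exp (μ * t) * (V 0 + C / -μ) := by gcongr; simp only [F] at hFt; linarith
    _ = _ := mul_comm _ _

theorem add_mul_sqrt_le {β v : ℝ} (hβ : β < 0) (hv : 0 ≤ v) (b : ℝ) :
    β * v + b * √v ≤ β / 2 * v + b ^ 2 / (-2 * β) := by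
  have hyoung := two_mul_le_add_mul_sq (a := √v) (b := b) (neg_pos.mpr hβ)
  rw [sq_sqrt hv] at hyoung
  have hdiv : b ^ 2 / (-2 * β) = (-β)⁻¹ * b ^ 2 / 2 := by
    field_simp [hβ.ne]
  rw [hdiv]
  linarith

theorem stmt_15_general (β δ K : ℝ) (hβ : β < 0) (hK : 0 < K)
    (V : ℝ → ℝ) (hVnn : ∀ t ≥ (0 : ℝ), 0 ≤ V t)
    (hVdiff : ∀ t ≥ (0 : ℝ), DifferentiableWithinAt ℝ V (Ici 0) t)
    (hineq : ∀ t ≥ (0 : ℝ), derivWithin V (Ici 0) t ≤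
      β * V t + δ * Real.exp (-K * t) * Real.sqrt (V t)) :
    Tendsto V atTop (nhds 0) := by
  set μ := max (β / 2) (-K)
  have hμ : μ < 0 := max_lt (by linarith) (by linarith)
  set C := δ ^ 2 / (-2 * β)
  have hC : 0 ≤ C := div_nonneg (sq_nonneg δ) (by linarith)
  have hderiv (t : ℝ) (ht : 0 ≤ t) :
      derivWithin V (Ici 0) t ≤ μ * V t + C * exp (2 * μ * t) := calc
    _ ≤ β * V t + δ * exp (-K * t) * √(V t) := hineq t ht
    _ ≤ β / 2 * V t + (δ * exp (-K * t)) ^ 2 / (-2 * β) := add_mul_sqrt_le hβ (hVnn t ht) _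
    _ = β / 2 * V t + C * exp (2 * -K * t) := by
      rw [mul_pow, ← exp_nat_mul]; simp only [C]; push_cast; ring_nf
    _ ≤ μ * V t + C * exp (2 * μ * t) := by
      have hVt := hVnn t ht
      gcongr
      · exact le_max_left _ _
      · exact le_max_right _ _
  have hbound (t : ℝ) (ht : 0 ≤ t) : V t ≤ (V 0 + C / -μ) * exp (μ * t) :=
    le_exp_mul_of_hasDerivWithinAt_le hμ hC (fun s hs ↦ (hVdiff s hs).hasDerivWithinAt) hderiv ht
  have hdecay : Tendsto (fun t ↦ (V 0 + C / -μ) * exp (μ * t)) atTop (nhds 0) := by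
    simpa using (tendsto_exp_atBot.comp (tendsto_id.const_mul_atTop_of_neg hμ)).const_mul _
  exact squeeze_zero' ((eventually_ge_atTop 0).mono hVnn) ((eventually_ge_atTop 0).mono hbound)
    hdecay

/-- Comparison lemma (Lemma 4 of Maffettone et al. 2024): if
`V' ≤ β V + δ exp(-K t) √V` on `[0, ∞)` with `β < 0`, `δ ≥ 0`, `K > 0`, and
`V ≥ 0`, then `V(t) → 0` as `t → ∞`. -/
theorem stmt_15 (β δ K : ℝ) (hβ : β < 0) (hδ : 0 ≤ δ) (hK : 0 < K)
    (V : ℝ → ℝ) (hVnn : ∀ t ≥ (0 : ℝ), 0 ≤ V t)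
    (hVdiff : ∀ t ≥ (0 : ℝ), DifferentiableWithinAt ℝ V (Ici 0) t)
    (hineq : ∀ t ≥ (0 : ℝ), derivWithin V (Ici 0) t ≤
      β * V t + δ * Real.exp (-K * t) * Real.sqrt (V t)) :
    Tendsto V atTop (nhds 0) :=
  stmt_15_general β δ K hβ hK V hVnn hVdiff hineq
end
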